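/- arXiv:2507.14616 — 3 statements merged into one kernel-verified Lean document; each statement's English description precedes it below -/
import Mathlib

section
/- Let p be an odd prime, let r be an integer with 0 ≤ r ≤ p-1, let u ∈ F_p and α ∈ F_p^×, let E be a field of characteristic p, and let β ∈ E be an element with β² equal to the image of α in E. Then t_r(u,α) = -(-1)^{p-1-r} · 2^{p-1-r} · β^{p-1-r} · P̄_{p-1-r}(u·β^{-1}) in E, where t_r(u,α) is viewed in E via the embedding of F_p. -/
open Polynomial

/-- The mod-`p` reduction of the `r`-th Legendre polynomial
`P_r(X) = 2^{-r} · Σ_{k=0}^{⌊r/2⌋} (-1)^k · C(r,k) · C(2r-2k, r) · X^{r-2k}`,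
defined directly over any field `E` (intended: of odd characteristic). -/
noncomputable def legendreMod (E : Type*) [Field E] (r : ℕ) : E[X] :=
  C (((2 : E) ^ r)⁻¹) * ∑ k ∈ Finset.range (r / 2 + 1),
    C ((-1 : E) ^ k * (r.choose k : E) * (((2 * r - 2 * k).choose r : ℕ) : E)) * X ^ (r - 2 * k)

/-- `t_r(u,α) = - Σ_{j ∈ S_{p-1-r}} (-1)^{(p-1-r-j)/2} · C(p-1-r,(p-1-r-j)/2) · C(r,j)
· α^{(p-1-r-j)/2} · u^j` where `S_{p-1-r}` is the set of `0 ≤ j ≤ p-1-r` of the same parity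
as `p-1-r`. -/
def tCoef (p r : ℕ) (u α : ZMod p) : ZMod p :=
  - ∑ j ∈ (Finset.range (p - 1 - r + 1)).filter (fun j => j % 2 = (p - 1 - r) % 2),
    (-1) ^ ((p - 1 - r - j) / 2) * ((p - 1 - r).choose ((p - 1 - r - j) / 2) : ZMod p) *
      (r.choose j : ZMod p) * α ^ ((p - 1 - r - j) / 2) * u ^ j

/-!
With `m = p - 1 - r`, the summand of `t_r(u, α)` with index `j = m - 2k` is, up to the global
sign `(-1)^m`, the `k`-th summand of the homogenised Legendre polynomial
`2^m β^m P̄_m(x / β)` at `x = u`, `β² = α`. The only arithmetic input is the congruence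
`C(p-1-m, j) ≡ (-1)^j C(m+j, j) (mod p)`: multiplied by `j!`, both sides are the falling
factorial of length `j` at `p - 1 - m ≡ -(m + 1)`.
-/

open scoped Nat

theorem CharP.cast_choose_sub_one_sub {K : Type*} [Field K] (p : ℕ) [Fact p.Prime] [CharP K p]
    {a b : ℕ} (ha : a < p) (hb : b < p) :
    ((p - 1 - a).choose b : K) = (-1) ^ b * ((a + b).choose b : K) := by
  have hfac : (b ! : K) ≠ 0 := by
    rw [Ne, CharP.cast_eq_zero_iff K p, Nat.Prime.dvd_factorial Fact.out]
    omega
  have hneg : -((p - 1 - a : ℕ) : K) = ((a + 1 : ℕ) : K) := by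
    rw [Nat.cast_sub (by omega), Nat.cast_sub (by omega), CharP.cast_eq_zero]
    push_cast; ring
  apply mul_left_cancel₀ hfac
  calc (b ! : K) * (p - 1 - a).choose b = (descPochhammer K b).eval ((p - 1 - a : ℕ) : K) := by
        rw [descPochhammer_eval_eq_descFactorial, Nat.descFactorial_eq_factorial_mul_choose]
        push_cast; rfl
    _ = (-1) ^ b * (ascPochhammer K b).eval (-((p - 1 - a : ℕ) : K)) := by
        rw [ascPochhammer_eval_neg_eq_descPochhammer, ← mul_assoc, ← mul_pow, neg_one_mul,
          neg_neg, one_pow, one_mul]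
    _ = (b ! : K) * ((-1) ^ b * ((a + b).choose b : K)) := by
        rw [hneg, ← ascPochhammer_eval_cast, ascPochhammer_nat_eq_ascFactorial,
          Nat.ascFactorial_eq_factorial_mul_choose]
        push_cast; ring

theorem Finset.sum_filter_parity_eq_sum_range {M : Type*} [AddCommMonoid M] (m : ℕ)
    (f : ℕ → M) :
    ∑ j ∈ (range (m + 1)).filter (fun j => j % 2 = m % 2), f j =
      ∑ k ∈ range (m / 2 + 1), f (m - 2 * k) := by
  refine sum_nbij' (fun j => (m - j) / 2) (fun k => m - 2 * k) ?_ ?_ ?_ ?_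
    fun j hj => congrArg f ?_ <;>
  simp only [mem_filter, mem_range] at * <;>
  omega

theorem two_pow_mul_pow_mul_eval_legendreMod {K : Type*} [Field K] (h2 : (2 : K) ≠ 0) {β : K}
    (hβ : β ≠ 0) (m : ℕ) (x : K) :
    2 ^ m * β ^ m * (legendreMod K m).eval (x * β⁻¹) =
      ∑ k ∈ Finset.range (m / 2 + 1), (-1) ^ k * (m.choose k : K) *
        ((2 * m - 2 * k).choose m : K) * (β ^ 2) ^ k * x ^ (m - 2 * k) := by
  simp only [legendreMod, eval_mul, eval_C, eval_finsetSum, eval_pow, eval_X, Finset.mul_sum]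
  refine Finset.sum_congr rfl fun k hk => ?_
  have hk : 2 * k ≤ m := by rw [Finset.mem_range] at hk; omega
  have hβm : β ^ m = β ^ (m - 2 * k) * (β ^ 2) ^ k := by
    rw [← pow_mul, ← pow_add, Nat.sub_add_cancel hk]
  rw [hβm, mul_pow, inv_pow]
  field_simp

/-- For an odd prime `p`, `0 ≤ r ≤ p-1`, `u ∈ F_p`, `α ∈ F_p^×`, a field `E` of characteristic
`p` and `β ∈ E` with `β² = α`, one has
`t_r(u,α) = -(-1)^{p-1-r} · 2^{p-1-r} · β^{p-1-r} · P̄_{p-1-r}(u·β⁻¹)` in `E`. -/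
theorem tCoef_eq_legendre (p : ℕ) [Fact p.Prime] (hodd : Odd p)
    (r : ℕ) (hr : r ≤ p - 1) (u α : ZMod p) (hα : α ≠ 0)
    (E : Type*) [Field E] [CharP E p] (β : E)
    (hβ : β ^ 2 = ZMod.castHom dvd_rfl E α) :
    ZMod.castHom dvd_rfl E (tCoef p r u α) =
      - ((-1) ^ (p - 1 - r) * 2 ^ (p - 1 - r) * β ^ (p - 1 - r) *
        Polynomial.eval (ZMod.castHom dvd_rfl E u * β⁻¹) (legendreMod E (p - 1 - r))) := by
  have hp : p.Prime := Fact.out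
  have h2 : (2 : E) ≠ 0 := by
    rw [← Nat.cast_two, Ne, CharP.cast_eq_zero_iff E p,
      Nat.prime_dvd_prime_iff_eq hp Nat.prime_two]
    rintro rfl
    exact Nat.not_odd_iff_even.mpr even_two hodd
  have hβ0 : β ≠ 0 := by
    rintro rfl
    exact hα ((ZMod.castHom dvd_rfl E).injective (by simpa using hβ.symm))
  rw [tCoef]
  set m := p - 1 - r
  rw [map_neg, Finset.sum_filter_parity_eq_sum_range, map_sum, mul_assoc ((-1 : E) ^ m),
    mul_assoc ((-1 : E) ^ m), two_pow_mul_pow_mul_eval_legendreMod h2 hβ0, hβ, Finset.mul_sum]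
  refine congrArg Neg.neg (Finset.sum_congr rfl fun k hk => ?_)
  have hk : 2 * k ≤ m := by rw [Finset.mem_range] at hk; omega
  have hm_lt : m < p := by have := hp.pos; omega
  have hchoose :
      (r.choose (m - 2 * k) : E) = (-1) ^ (m - 2 * k) * ((2 * m - 2 * k).choose m : E) := by
    rw [show r = p - 1 - m by omega,
      CharP.cast_choose_sub_one_sub (a := m) (b := m - 2 * k) p hm_lt (by omega),
      ← Nat.choose_symm_add, show m + (m - 2 * k) = 2 * m - 2 * k by omega]
  have hsign : (-1 : E) ^ m = (-1) ^ (m - 2 * k) := by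
    nth_rw 1 [← Nat.sub_add_cancel hk]
    rw [pow_add, pow_mul, neg_one_sq, one_pow, mul_one]
  simp only [map_mul, map_pow, map_neg, map_one, map_natCast, Nat.sub_sub_self hk,
    Nat.mul_div_cancel_left k two_pos, hchoose, hsign]
  ring
end

section
/- Let p be an odd prime, let m ≥ 2 be an integer, and let q = p^m. Then there exists a nonsquare c ∈ F_q^× such that the polynomial X² - c does not divide the image in F_q[X] of the product ∏_{i=0}^{(p-1)/2} P̄_i(X) of the mod-p Legendre polynomials of degrees 0 through (p-1)/2. -/
/-!
If `X² - c` divided `Q = ∏_{i ≤ (p-1)/2} P̄_i` for every nonsquare `c ∈ F_q`, then, these factors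
being pairwise coprime, their product would divide `Q`, which is nonzero because `P̄_r` has
leading coefficient `2^{-r} C(2r, r) ≢ 0 (mod p)` for `2r < p`. The nonsquares make up half of
`F_q^×`, so this product has degree `q - 1 ≥ p² - 1`, whereas `deg Q ≤ Σ_{i ≤ (p-1)/2} i = (p² - 1)/8`.
-/

open Polynomial Finset

section Legendre

variable (E : Type*) [Field E]

theorem legendreMod_natDegree_le (r : ℕ) : (legendreMod E r).natDegree ≤ r := by
  refine (natDegree_C_mul_le _ _).trans <| (natDegree_sum_le _ _).trans ?_
  rw [Finset.fold_max_le]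
  exact ⟨r.zero_le, fun k _ => (natDegree_C_mul_le _ _).trans ((natDegree_X_pow_le _).trans (by omega))⟩

theorem legendreMod_coeff_self (r : ℕ) :
    (legendreMod E r).coeff r = ((2 : E) ^ r)⁻¹ * ((2 * r).choose r : ℕ) := by
  rw [legendreMod, coeff_C_mul, finsetSum_coeff, Finset.sum_eq_single 0]
  · simp
  · intro k hk hk0
    rw [mem_range] at hk
    rw [coeff_C_mul, coeff_X_pow, if_neg (by omega), mul_zero]
  · simp

theorem legendreMod_ne_zero {p : ℕ} [CharP E p] (hp : p.Prime) {r : ℕ} (hr : 2 * r < p) :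
    legendreMod E r ≠ 0 := by
  have hpow : ((2 ^ r : ℕ) : E) ≠ 0 := by
    rw [Ne, CharP.cast_eq_zero_iff E p]
    intro h
    have := Nat.le_of_dvd two_pos (hp.dvd_of_dvd_pow h)
    obtain rfl : r = 0 := by omega
    exact hp.one_lt.ne' (Nat.dvd_one.mp h)
  have hchoose : (((2 * r).choose r : ℕ) : E) ≠ 0 := by
    rw [Ne, CharP.cast_eq_zero_iff E p]
    intro h
    have hfac : p ∣ (2 * r).factorial := by
      rw [← Nat.choose_mul_factorial_mul_factorial (by omega : r ≤ 2 * r), mul_assoc]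
      exact h.mul_right _
    exact absurd ((hp.dvd_factorial).mp hfac) (by omega)
  intro h
  have := legendreMod_coeff_self E r
  rw [h, coeff_zero, eq_comm] at this
  push_cast at hpow
  exact mul_ne_zero (inv_ne_zero hpow) hchoose this

theorem natDegree_prod_legendreMod_mul_two_le (n : ℕ) :
    (∏ i ∈ range n, legendreMod E i).natDegree * 2 ≤ n * (n - 1) := by
  rw [← Finset.sum_range_id_mul_two]
  gcongr
  exact (natDegree_prod_le _ _).trans (sum_le_sum fun i _ => legendreMod_natDegree_le E i)

end Legendre

section Polynomial

variable {K : Type*} [Field K]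

theorem isCoprime_X_pow_sub_C_of_ne (n : ℕ) {a b : K} (hab : a ≠ b) :
    IsCoprime (X ^ n - C a) (X ^ n - C b) := by
  simpa using ((isCoprime_X_sub_C_of_isUnit_sub (sub_ne_zero_of_ne hab).isUnit).map
    (expand K n : K[X] →+* K[X]))

theorem mul_card_le_natDegree_of_forall_X_pow_sub_C_dvd {n : ℕ} (hn : 0 < n) {Q : K[X]}
    (hQ : Q ≠ 0) (S : Finset K) (hdvd : ∀ c ∈ S, X ^ n - C c ∣ Q) : n * #S ≤ Q.natDegree := by
  have hprod : ∏ c ∈ S, (X ^ n - C c) ∣ Q :=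
    Finset.prod_dvd_of_coprime (fun a _ b _ hab => isCoprime_X_pow_sub_C_of_ne n hab) hdvd
  calc n * #S = (∏ c ∈ S, (X ^ n - C c)).natDegree := by
        rw [natDegree_prod _ _ fun c _ => X_pow_sub_C_ne_zero hn c]
        simp [mul_comm]
    _ ≤ Q.natDegree := natDegree_le_of_dvd hprod hQ

end Polynomial

theorem FiniteField.card_sub_one_le_two_mul_card_nonsquares {F : Type*} [Field F] [Fintype F]
    [DecidableEq F] (hF : ringChar F ≠ 2) :
    Fintype.card F - 1 ≤ 2 * #{c : F | ¬IsSquare c} := by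
  set S := ({c : F | ¬IsSquare c} : Finset F)
  obtain ⟨a, ha⟩ := FiniteField.exists_nonsquare hF
  -- multiplication by the nonsquare `a` carries nonzero squares to nonsquares
  have hcover : (univ : Finset F) ⊆ insert 0 (S ∪ S.image (fun c => a⁻¹ * c)) := by
    intro c _
    by_cases hc0 : c = 0
    · simp [hc0]
    by_cases hc : IsSquare c
    · have hac : ¬IsSquare (a * c) := fun hac => ha (by simpa [hc0] using hac.div hc)
      have ha0 : a ≠ 0 := by rintro rfl; exact ha .zero
      simp only [mem_insert, mem_union, mem_image]
      exact Or.inr (Or.inr ⟨a * c, by simpa [S] using hac, by field_simp⟩)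
    · simp [S, hc]
  calc Fintype.card F - 1 ≤ #(S ∪ S.image (fun c => a⁻¹ * c)) := by
        have := (card_le_card hcover).trans (card_insert_le _ _)
        rw [card_univ] at this
        omega
    _ ≤ #S + #S := (card_union_le _ _).trans (Nat.add_le_add_left card_image_le _)
    _ = 2 * #S := by ring

/-- For an odd prime `p`, `m ≥ 2` and `q = p^m`, there is a nonsquare `c ∈ F_q^×` such that
`X² - c` does not divide the image in `F_q[X]` of `∏_{i=0}^{(p-1)/2} P̄_i(X)`. -/
theorem exists_nonsquare_not_dvd_prod_legendre (p m : ℕ) [Fact p.Prime] (hodd : Odd p)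
    (hm : 2 ≤ m)
    (F : Type*) [Field F] [Fintype F] (hF : Fintype.card F = p ^ m) :
    ∃ c : F, c ≠ 0 ∧ ¬ IsSquare c ∧
      ¬ ((X ^ 2 - C c) ∣ ∏ i ∈ Finset.range ((p - 1) / 2 + 1), legendreMod F i) := by
  classical
  have hp : p.Prime := Fact.out
  have : CharP F p := charP_of_card_eq_prime_pow hF
  have hchar : ringChar F ≠ 2 := ringChar.eq F p ▸ hodd.ne_two_of_dvd_nat dvd_rfl
  set N := (p - 1) / 2
  have hpN : p = 2 * N + 1 := by obtain ⟨k, hk⟩ := hodd; omega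
  by_contra! hdvd
  have hQ : ∏ i ∈ range (N + 1), legendreMod F i ≠ 0 := prod_ne_zero_iff.mpr fun i hi =>
    legendreMod_ne_zero F hp (by rw [mem_range] at hi; omega)
  have hnonsq := mul_card_le_natDegree_of_forall_X_pow_sub_C_dvd two_pos hQ {c : F | ¬IsSquare c}
    fun c hc => hdvd c (by rintro rfl; simp at hc) (by simpa using hc)
  have hdeg := natDegree_prod_legendreMod_mul_two_le F (N + 1)
  have hcard := FiniteField.card_sub_one_le_two_mul_card_nonsquares hchar
  have hq : (2 * N + 1) ^ 2 ≤ Fintype.card F := hpN ▸ hF ▸ Nat.pow_le_pow_right hp.pos hm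
  have hN : 1 ≤ N := by have := hp.two_le; omega
  rw [Nat.add_sub_cancel] at hdeg
  have hq' : (Fintype.card F - 1) * 2 ≤ (N + 1) * N := by omega
  have : (2 * N + 1) ^ 2 ≤ (Fintype.card F - 1) + 1 := by omega
  nlinarith
end

section
/- Let p be an odd prime, let m ≥ 1 be an integer, let q = p^m, and let r be an integer with 0 ≤ r ≤ p-1. Then the mod-p Legendre polynomials satisfy P̄_{q-1-r}(X) = P̄_r(X) in F_p[X]. -/
/-!
Over a field in which `2` is invertible, `P_n(X) = P̃_n((1 - X)/2)`, where
`P̃_n = ∑ (-1)^k C(n,k) C(n+k,n) X^k` is the shifted Legendre polynomial: both sides, scaled by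
`2^n`, are the `n`-th Hasse derivative of `(X² - 1)^n`, computed once in `X` and once in `1 - X`.
In characteristic `p`, if `a + b + 1 = p^m` then `(1 + X)^a = (1 + X^{p^m}) (1 + X)^{-(b+1)}`,
so `(-1)^k C(a,k) = C(b+k,b)` for `k < p^m`. The `k`-th coefficient of `P̃_a` is therefore
`C(a+k,a) C(b+k,b)`, which is symmetric in `a` and `b`; hence `P̃_a = P̃_b` mod `p`, and the same
holds for Legendre polynomials.
-/

open Polynomial

open Finset
open scoped Nat

theorem neg_one_pow_mul_choose_eq_choose_of_add_eq_pow {R : Type*} [CommRing R] {p : ℕ}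
    [Fact p.Prime] [CharP R p] {a b m k : ℕ} (hab : a + b + 1 = p ^ m) (hk : k < p ^ m) :
    (-1) ^ k * (a.choose k : R) = ((b + k).choose b : R) := by
  have hfrob : (1 + PowerSeries.X : PowerSeries R) ^ p ^ m = 1 + PowerSeries.X ^ p ^ m := by
    have h : (1 + X : R[X]) ^ p ^ m = 1 + X ^ p ^ m := by rw [add_pow_char_pow, one_pow]
    simpa using congrArg (fun f : R[X] => (f : PowerSeries R)) h
  have key : PowerSeries.binomialSeries R (a : ℤ) =
      (1 + PowerSeries.X ^ p ^ m) * PowerSeries.binomialSeries R (-(b + 1 : ℤ)) := by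
    rw [← hfrob, ← PowerSeries.binomialSeries_nat (R := ℤ), ← PowerSeries.binomialSeries_add,
      ← hab]
    congr 1
    push_cast
    ring
  have hcoeff : (a.choose k : R) = (-1) ^ k * ((b + k).choose k : R) := by
    have := congrArg (PowerSeries.coeff k) key
    rw [add_mul, one_mul, map_add, PowerSeries.coeff_X_pow_mul', if_neg (by omega), add_zero,
      PowerSeries.binomialSeries_coeff, PowerSeries.binomialSeries_coeff, Ring.choose_natCast,
      Ring.choose_neg, show (b : ℤ) + 1 + k - 1 = ((b + k : ℕ) : ℤ) by push_cast; ring,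
      Ring.choose_natCast] at this
    simpa [Units.smul_def, Int.cast_negOnePow_natCast] using this
  rw [hcoeff, Nat.choose_symm_add, ← mul_assoc, ← mul_pow, neg_one_mul, neg_neg, one_pow, one_mul]

theorem map_shiftedLegendre_eq_of_add_eq_pow {R : Type*} [CommRing R] {p : ℕ} [Fact p.Prime]
    [CharP R p] {a b m : ℕ} (hab : a + b + 1 = p ^ m) :
    (shiftedLegendre a).map (Int.castRingHom R) = (shiftedLegendre b).map (Int.castRingHom R) := by
  ext k
  simp only [coeff_map, coeff_shiftedLegendre, eq_intCast, Int.cast_mul, Int.cast_pow,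
    Int.cast_neg, Int.cast_one, Int.cast_natCast]
  by_cases hk : k < p ^ m
  · rw [neg_one_pow_mul_choose_eq_choose_of_add_eq_pow hab hk,
      neg_one_pow_mul_choose_eq_choose_of_add_eq_pow (by omega : b + a + 1 = p ^ m) hk, mul_comm]
  · rw [Nat.choose_eq_zero_of_lt (by omega : a < k), Nat.choose_eq_zero_of_lt (by omega : b < k)]
    simp

theorem map_hasseDeriv {R S : Type*} [Semiring R] [Semiring S] (g : R →+* S) (k : ℕ)
    (f : R[X]) : (hasseDeriv k f).map g = hasseDeriv k (f.map g) := by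
  ext n
  simp [hasseDeriv_coeff]

theorem hasseDeriv_C_mul_X_pow {R : Type*} [Semiring R] (k m : ℕ) (c : R) :
    hasseDeriv k (C c * X ^ m) = C ((m.choose k : R) * c) * X ^ (m - k) := by
  simp only [C_mul_X_pow_eq_monomial, hasseDeriv_monomial]

theorem hasseDeriv_X_sq_sub_one_pow {R : Type*} [CommRing R] (n : ℕ) :
    hasseDeriv n ((X ^ 2 - 1) ^ n : R[X]) = ∑ k ∈ range (n / 2 + 1),
      C ((-1 : R) ^ k * (n.choose k : R) * (((2 * n - 2 * k).choose n : ℕ) : R)) *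
        X ^ (n - 2 * k) := by
  have hexp : (X ^ 2 - 1 : R[X]) ^ n =
      ∑ k ∈ range (n + 1), C ((-1 : R) ^ k * (n.choose k : R)) * X ^ (2 * n - 2 * k) := by
    rw [sub_eq_neg_add, add_pow]
    refine sum_congr rfl fun k _ => ?_
    rw [← pow_mul, show 2 * (n - k) = 2 * n - 2 * k by omega]
    simp only [C_mul, C_pow, C_neg, C_1, map_natCast]
    ring
  rw [hexp, map_sum]
  simp_rw [hasseDeriv_C_mul_X_pow]
  rw [← sum_subset (range_subset_range.mpr (by omega : n / 2 + 1 ≤ n + 1))]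
  · refine sum_congr rfl fun k hk => ?_
    rw [show 2 * n - 2 * k - n = n - 2 * k by omega]
    congr 2
    ring
  · intro k hkn hk
    rw [mem_range] at hk hkn
    rw [Nat.choose_eq_zero_of_lt (by omega : 2 * n - 2 * k < n)]
    simp

theorem hasseDeriv_X_pow_mul_C_sub_X_pow {R : Type*} [CommRing R] (n : ℕ) (a : R) :
    hasseDeriv n (X ^ n * (C a - X) ^ n : R[X]) = ∑ k ∈ range (n + 1),
      C ((-1 : R) ^ k * (n.choose k : R) * ((n + k).choose n : R) * a ^ (n - k)) * X ^ k := by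
  have hexp : (X ^ n * (C a - X) ^ n : R[X]) =
      ∑ k ∈ range (n + 1), C ((-1 : R) ^ k * (n.choose k : R) * a ^ (n - k)) * X ^ (n + k) := by
    rw [sub_eq_neg_add, add_pow, mul_sum]
    refine sum_congr rfl fun k _ => ?_
    simp only [C_mul, C_pow, C_neg, C_1, map_natCast, pow_add]
    ring
  rw [hexp, map_sum]
  refine sum_congr rfl fun k _ => ?_
  rw [hasseDeriv_C_mul_X_pow, Nat.add_sub_cancel_left]
  congr 2
  ring

/- Over `ℤ` the factor `n!` can be cancelled, so Hasse derivatives may be replaced by iterated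
derivatives, which commute with `X ↦ 1 - X` up to the sign `(-1)^n`. -/
theorem hasseDeriv_X_sq_sub_one_pow_eq_comp_int (n : ℕ) :
    hasseDeriv n ((X ^ 2 - 1) ^ n : ℤ[X]) =
      (hasseDeriv n (X ^ n * (C 2 - X) ^ n)).comp (1 - X) := by
  have hD (f : ℤ[X]) : (n ! : ℤ[X]) * hasseDeriv n f = (derivative (R := ℤ))^[n] f := by
    rw [← factorial_smul_hasseDeriv (R := ℤ), LinearMap.smul_apply, nsmul_eq_mul]
  have hF : (X ^ 2 - 1 : ℤ[X]) ^ n =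
      C ((-1) ^ n) * (X ^ n * (C 2 - X : ℤ[X]) ^ n).comp (1 - X) := by
    simp only [mul_comp, pow_comp, X_comp, sub_comp, C_comp, C_pow, C_neg, C_1, ← mul_pow]
    congr 1
    simp only [C_ofNat]
    ring
  apply nat_mul_inj' _ (Nat.factorial_ne_zero n)
  rw [hD, hF, iterate_derivative_C_mul, iterate_derivative_comp_one_sub_X, ← hD, natCast_mul_comp,
    ← mul_assoc, C_pow, C_neg, C_1, ← mul_pow, neg_one_mul, neg_neg, one_pow, one_mul]

theorem hasseDeriv_X_sq_sub_one_pow_eq_comp {R : Type*} [CommRing R] (n : ℕ) :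
    hasseDeriv n ((X ^ 2 - 1) ^ n : R[X]) =
      (hasseDeriv n (X ^ n * (C 2 - X) ^ n)).comp (1 - X) := by
  simpa [map_hasseDeriv, map_comp, C_ofNat] using
    congrArg (map (Int.castRingHom R)) (hasseDeriv_X_sq_sub_one_pow_eq_comp_int n)

theorem legendreMod_eq_hasseDeriv (E : Type*) [Field E] (n : ℕ) :
    legendreMod E n = C ((2 ^ n)⁻¹) * hasseDeriv n ((X ^ 2 - 1) ^ n) := by
  rw [legendreMod, hasseDeriv_X_sq_sub_one_pow]

theorem legendreMod_eq_shiftedLegendre_comp {E : Type*} [Field E] (h2 : (2 : E) ≠ 0) (n : ℕ) :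
    legendreMod E n = ((shiftedLegendre n).map (Int.castRingHom E)).comp (C 2⁻¹ * (1 - X)) := by
  rw [legendreMod_eq_hasseDeriv, hasseDeriv_X_sq_sub_one_pow_eq_comp,
    hasseDeriv_X_pow_mul_C_sub_X_pow, shiftedLegendre]
  simp only [Polynomial.map_sum, Polynomial.sum_comp, mul_sum]
  refine sum_congr rfl fun k hk => ?_
  have hkn : k ≤ n := Nat.lt_succ_iff.mp (mem_range.mp hk)
  have hpow : ((2 : E) ^ n)⁻¹ * 2 ^ (n - k) = 2⁻¹ ^ k := by
    rw [pow_sub₀ _ h2 hkn, inv_mul_cancel_left₀ (pow_ne_zero _ h2), inv_pow]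
  rw [Polynomial.map_mul, map_C, Polynomial.map_pow, map_X, mul_comp, mul_comp, C_comp, C_comp,
    X_pow_comp, X_pow_comp, mul_pow, ← C_pow, ← mul_assoc, ← mul_assoc, ← C_mul, ← C_mul]
  congr 2
  rw [← hpow, eq_intCast]
  push_cast
  ring

/-- For an odd prime `p`, `m ≥ 1`, `q = p^m` and `0 ≤ r ≤ p-1`, one has
`P̄_{q-1-r}(X) = P̄_r(X)` in `F_p[X]`. -/
theorem legendreMod_symm (p m : ℕ) [Fact p.Prime] (hodd : Odd p) (hm : 1 ≤ m)
    (r : ℕ) (hr : r ≤ p - 1) :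
    legendreMod (ZMod p) (p ^ m - 1 - r) = legendreMod (ZMod p) r := by
  have h2 : (2 : ZMod p) ≠ 0 := Ring.two_ne_zero <| by
    rw [ZMod.ringChar_zmod_n]
    rintro rfl
    exact (by decide : ¬Odd 2) hodd
  have hsum : p ^ m - 1 - r + r + 1 = p ^ m := by
    have hp : 0 < p := (Fact.out : p.Prime).pos
    have : p ≤ p ^ m := Nat.le_self_pow (by omega) p
    omega
  rw [legendreMod_eq_shiftedLegendre_comp h2, legendreMod_eq_shiftedLegendre_comp h2,
    map_shiftedLegendre_eq_of_add_eq_pow hsum]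
end
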